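/- arXiv:2012.12383 — 6 statements merged into one kernel-verified Lean document; each statement's English description precedes it below -/
import Mathlib

section
/- Let G be a connected undirected graph on the vertex set {1,…,L}, let η > 0, and let W ∈ ℝ^{L×L} be a doubly stochastic matrix such that w_{ii} ≥ η for all i, w_{ij} ≥ η whenever {i,j} is an edge of G, and w_{ij} = 0 whenever i ≠ j and {i,j} is not an edge of G. Then for every integer s ≥ 1 and all i, j ∈ {1,…,L}, ([W^s]_{ij} − 1/L)² ≤ (1 − η/(2L²))^{s−1}. -/
/-!
For every `x`, a doubly stochastic `W` satisfies `‖x‖² - ‖Wx‖² = ∑ᵢ ∑ⱼ w_ij (x_j - (Wx)_i)²`.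
Along an edge `{u, w}` the terms `j = u` and `j = w` of row `u` alone are at least
`η (x_w - x_u)² / 2`, so telescoping along a path (of length `< L`) and Cauchy–Schwarz bound every
`(x_v - x_u)²` by `2L/η` times the dissipation. If `∑ x = 0`, then
`∑ᵤ ∑ᵥ (x_v - x_u)² = 2L ‖x‖²`, whence `‖Wx‖² ≤ (1 - η/L²) ‖x‖²`. The columns of `W^s` centred
at `1/L` have zero sum, satisfy `z_{s+1} = W z_s`, and start with `‖z_0‖² ≤ 1`.
-/

open Matrix Finset

section OrderedCommRing

variable {R n : Type*} [CommRing R] [PartialOrder R] [IsOrderedRing R] [Fintype n] [DecidableEq n]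
  {M : Matrix n n R}

theorem sum_sq_sub_sum_sq_mulVec_of_mem_doublyStochastic (hM : M ∈ doublyStochastic R n)
    (x : n → R) :
    ∑ i, x i ^ 2 - ∑ i, (M *ᵥ x) i ^ 2 = ∑ i, ∑ j, M i j * (x j - (M *ᵥ x) i) ^ 2 := by
  have hrow (i : n) : ∑ j, M i j * (x j - (M *ᵥ x) i) ^ 2
      = ∑ j, M i j * x j ^ 2 - (M *ᵥ x) i ^ 2 := by
    have hy : ∑ j, M i j * x j = (M *ᵥ x) i := rfl
    calc ∑ j, M i j * (x j - (M *ᵥ x) i) ^ 2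
        = ∑ j, (M i j * x j ^ 2 - 2 * (M *ᵥ x) i * (M i j * x j) + (M *ᵥ x) i ^ 2 * M i j) :=
          sum_congr rfl fun j _ => by ring
      _ = ∑ j, M i j * x j ^ 2 - (M *ᵥ x) i ^ 2 := by
        rw [sum_add_distrib, sum_sub_distrib, ← mul_sum, ← mul_sum, hy,
          sum_row_of_mem_doublyStochastic hM]
        ring
  simp_rw [hrow, sum_sub_distrib, sum_comm (γ := n) (f := fun i j => M i j * x j ^ 2), ← sum_mul,
    sum_col_of_mem_doublyStochastic hM, one_mul]

theorem mul_apply_sub_eq_mulVec_of_mem_doublyStochastic (hM : M ∈ doublyStochastic R n)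
    (A : Matrix n n R) (i j : n) (c : R) :
    (M * A) i j - c = (M *ᵥ fun k => A k j - c) i := by
  simp [mulVec, dotProduct, mul_apply, mul_sub, ← sum_mul, sum_row_of_mem_doublyStochastic hM]

end OrderedCommRing

theorem SimpleGraph.Walk.IsPath.sum_range_getVert_le {R V : Type*} [AddCommMonoid R] [Preorder R]
    [AddLeftMono R] [Fintype V] {G : SimpleGraph V} {u v : V} {p : G.Walk u v} (hp : p.IsPath)
    {c : V → R} (hc : ∀ i, 0 ≤ c i) :
    ∑ t ∈ range p.length, c (p.getVert t) ≤ ∑ i, c i := by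
  classical
  rw [← sum_image (hp.getVert_injOn.mono fun t ht => (mem_range.1 ht).le)]
  exact sum_le_univ_sum_of_nonneg hc

theorem sum_sum_sub_sq_of_sum_eq_zero {R n : Type*} [CommRing R] [Fintype n] (x : n → R)
    (hx : ∑ i, x i = 0) :
    ∑ u, ∑ v, (x v - x u) ^ 2 = 2 * Fintype.card n * ∑ i, x i ^ 2 := by
  simp_rw [sub_sq, sum_add_distrib, sum_sub_distrib]
  simp only [sum_const, card_univ, nsmul_eq_mul, ← sum_mul, ← mul_sum, hx, mul_zero, zero_mul,
    sub_zero]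
  ring

section OrderedField

variable {R n : Type*} [Field R] [LinearOrder R] [IsStrictOrderedRing R] [Fintype n]

theorem SimpleGraph.Connected.sq_sub_le_card_mul_sum {G : SimpleGraph n} (hG : G.Connected)
    {x c : n → R} (hc : ∀ i, 0 ≤ c i) (hadj : ∀ u w, G.Adj u w → (x w - x u) ^ 2 ≤ c u)
    (u v : n) : (x v - x u) ^ 2 ≤ Fintype.card n * ∑ i, c i := by
  obtain ⟨p, hp⟩ := (hG.preconnected u v).exists_isPath
  have htel : x v - x u = ∑ t ∈ range p.length, (x (p.getVert (t + 1)) - x (p.getVert t)) := by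
    rw [sum_range_sub (fun t => x (p.getVert t)), p.getVert_length, p.getVert_zero]
  calc (x v - x u) ^ 2
      ≤ p.length * ∑ t ∈ range p.length, (x (p.getVert (t + 1)) - x (p.getVert t)) ^ 2 := by
        simpa [htel] using sq_sum_le_card_mul_sum_sq (s := range p.length)
          (f := fun t => x (p.getVert (t + 1)) - x (p.getVert t))
    _ ≤ p.length * ∑ t ∈ range p.length, c (p.getVert t) := by
        gcongr with t ht
        exact hadj _ _ (p.adj_getVert_succ (mem_range.1 ht))
    _ ≤ Fintype.card n * ∑ i, c i := by
        gcongr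
        · exact sum_nonneg fun t _ => hc _
        · exact hp.length_lt.le
        · exact hp.sum_range_getVert_le hc

theorem sum_sq_mulVec_le_of_connected [DecidableEq n] {M : Matrix n n R}
    (hM : M ∈ doublyStochastic R n) {G : SimpleGraph n} (hG : G.Connected) {η : R} (hη : 0 < η)
    (hdiag : ∀ i, η ≤ M i i) (hadj : ∀ i j, G.Adj i j → η ≤ M i j) {x : n → R}
    (hx : ∑ i, x i = 0) :
    ∑ i, (M *ᵥ x) i ^ 2 ≤ (1 - η / Fintype.card n ^ 2) * ∑ i, x i ^ 2 := by
  set N : R := (Fintype.card n : R)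
  have hN : 0 < N := Nat.cast_pos.2 (Fintype.card_pos_iff.2 hG.nonempty)
  set e : n → R := fun i => ∑ j, M i j * (x j - (M *ᵥ x) i) ^ 2
  have he (i : n) : 0 ≤ e i :=
    sum_nonneg fun j _ => mul_nonneg (nonneg_of_mem_doublyStochastic hM) (sq_nonneg _)
  have hedge (u w : n) (huw : G.Adj u w) : (x w - x u) ^ 2 ≤ 2 * e u / η := by
    -- `(x w - x u)² ≤ 2 (x u - y)² + 2 (x w - y)²` for `y = (M *ᵥ x) u`, and both weights are `≥ η`
    have hpair : M u u * (x u - (M *ᵥ x) u) ^ 2 + M u w * (x w - (M *ᵥ x) u) ^ 2 ≤ e u :=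
      add_le_sum (f := fun j => M u j * (x j - (M *ᵥ x) u) ^ 2)
        (fun j _ => mul_nonneg (nonneg_of_mem_doublyStochastic hM) (sq_nonneg _)) (mem_univ u)
        (mem_univ w) huw.ne
    rw [le_div_iff₀ hη]
    nlinarith [hdiag u, hadj u w huw, sq_nonneg (x u - (M *ᵥ x) u), sq_nonneg (x w - (M *ᵥ x) u),
      sq_nonneg (x u + x w - 2 * (M *ᵥ x) u)]
  have hspread : η * ∑ i, x i ^ 2 ≤ N ^ 2 * ∑ i, e i := by
    have hpairs : ∑ u, ∑ v, (x v - x u) ^ 2 ≤ N ^ 3 * ∑ i, 2 * e i / η := by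
      calc ∑ u, ∑ v, (x v - x u) ^ 2 ≤ ∑ _u : n, ∑ _v : n, N * ∑ i, 2 * e i / η :=
            sum_le_sum fun u _ => sum_le_sum fun v _ =>
              hG.sq_sub_le_card_mul_sum (fun i => by have := he i; positivity) hedge u v
        _ = N ^ 3 * ∑ i, 2 * e i / η := by simp only [sum_const, card_univ, nsmul_eq_mul]; ring
    rw [sum_sum_sub_sq_of_sum_eq_zero x hx, ← sum_div, ← mul_sum, mul_div_assoc',
      le_div_iff₀ hη] at hpairs
    refine le_of_mul_le_mul_left ?_ (by positivity : (0 : R) < 2 * N)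
    linear_combination hpairs
  have hdiss := sum_sq_sub_sum_sq_mulVec_of_mem_doublyStochastic hM x
  have hdecay : η / N ^ 2 * ∑ i, x i ^ 2 ≤ ∑ i, e i := by
    rw [div_mul_eq_mul_div, div_le_iff₀ (by positivity)]
    linarith
  linarith

theorem sum_sq_sub_inv_card_le_one {a : n → R} (ha : ∀ i, 0 ≤ a i) (hsum : ∑ i, a i = 1) :
    ∑ i, (a i - 1 / Fintype.card n) ^ 2 ≤ 1 := by
  obtain ⟨i₀, -, -⟩ := exists_ne_zero_of_sum_ne_zero (hsum ▸ one_ne_zero : ∑ i, a i ≠ 0)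
  have hN : (Fintype.card n : R) ≠ 0 := Nat.cast_ne_zero.2 (Fintype.card_pos_iff.2 ⟨i₀⟩).ne'
  have ha_le (i : n) : a i ≤ 1 := hsum ▸ single_le_sum (fun j _ => ha j) (mem_univ i)
  calc ∑ i, (a i - 1 / Fintype.card n) ^ 2 = ∑ i, a i ^ 2 - 1 / Fintype.card n := by
        simp_rw [sub_sq, sum_add_distrib, sum_sub_distrib]
        simp only [← sum_mul, ← mul_sum, hsum, sum_const, card_univ, nsmul_eq_mul]
        field_simp
        ring
    _ ≤ ∑ i, a i ^ 2 := sub_le_self _ (by positivity)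
    _ ≤ ∑ i, a i := sum_le_sum fun i _ => by nlinarith [ha i, ha_le i]
    _ = 1 := hsum

theorem one_sub_div_card_sq_nonneg [DecidableEq n] {M : Matrix n n R}
    (hM : M ∈ doublyStochastic R n) (hn : Nonempty n) {η : R} (hdiag : ∀ i, η ≤ M i i) :
    0 ≤ 1 - η / Fintype.card n ^ 2 := by
  obtain ⟨i⟩ := hn
  have hN : (1 : R) ≤ Fintype.card n := Nat.one_le_cast.2 (Fintype.card_pos_iff.2 ⟨i⟩)
  have hη : η ≤ 1 := (hdiag i).trans (le_one_of_mem_doublyStochastic hM)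
  rw [sub_nonneg, div_le_one (by positivity)]
  nlinarith

theorem sum_sq_pow_apply_sub_inv_card_le [DecidableEq n] {M : Matrix n n R}
    (hM : M ∈ doublyStochastic R n) {G : SimpleGraph n} (hG : G.Connected) {η : R} (hη : 0 < η)
    (hdiag : ∀ i, η ≤ M i i) (hadj : ∀ i j, G.Adj i j → η ≤ M i j) (j : n) (s : ℕ) :
    ∑ i, ((M ^ s) i j - 1 / Fintype.card n) ^ 2 ≤ (1 - η / Fintype.card n ^ 2) ^ s := by
  induction s with
  | zero =>
    exact (sum_sq_sub_inv_card_le_one (fun i => nonneg_of_mem_doublyStochastic (pow_mem hM 0))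
      (sum_col_of_mem_doublyStochastic (pow_mem hM 0) j)).trans_eq (pow_zero _).symm
  | succ s ih =>
    have hN : (Fintype.card n : R) ≠ 0 :=
      Nat.cast_ne_zero.2 (Fintype.card_pos_iff.2 hG.nonempty).ne'
    have hcol : ∑ i, ((M ^ s) i j - 1 / Fintype.card n) = 0 := by
      rw [sum_sub_distrib, sum_col_of_mem_doublyStochastic (pow_mem hM s), sum_const, card_univ,
        nsmul_eq_mul, mul_one_div_cancel hN, sub_self]
    calc ∑ i, ((M ^ (s + 1)) i j - 1 / Fintype.card n) ^ 2
        = ∑ i, (M *ᵥ fun k => (M ^ s) k j - 1 / Fintype.card n) i ^ 2 := by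
          simp only [pow_succ', mul_apply_sub_eq_mulVec_of_mem_doublyStochastic hM]
      _ ≤ (1 - η / Fintype.card n ^ 2) * ∑ i, ((M ^ s) i j - 1 / Fintype.card n) ^ 2 :=
          sum_sq_mulVec_le_of_connected hM hG hη hdiag hadj hcol
      _ ≤ (1 - η / Fintype.card n ^ 2) * (1 - η / Fintype.card n ^ 2) ^ s := by
          gcongr
          exact one_sub_div_card_sq_nonneg hM hG.nonempty hdiag
      _ = (1 - η / Fintype.card n ^ 2) ^ (s + 1) := (pow_succ' _ _).symm

end OrderedField

theorem doubly_stochastic_power_entry_bound_general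
    (L : ℕ) (G : SimpleGraph (Fin L)) (hG : G.Connected)
    (η : ℝ) (hη : 0 < η) (W : Matrix (Fin L) (Fin L) ℝ)
    (hW_nonneg : ∀ i j, 0 ≤ W i j)
    (hW_row : ∀ i, ∑ j, W i j = 1)
    (hW_col : ∀ j, ∑ i, W i j = 1)
    (hW_diag : ∀ i, η ≤ W i i)
    (hW_adj : ∀ i j, G.Adj i j → η ≤ W i j) :
    ∀ s : ℕ, 1 ≤ s → ∀ i j,
      ((W ^ s) i j - 1 / (L : ℝ)) ^ 2 ≤ (1 - η / (2 * (L : ℝ) ^ 2)) ^ (s - 1) := by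
  intro s _ i j
  have hW : W ∈ doublyStochastic ℝ (Fin L) :=
    mem_doublyStochastic_iff_sum.2 ⟨hW_nonneg, hW_row, hW_col⟩
  have hrate : 0 ≤ 1 - η / (L : ℝ) ^ 2 := by
    simpa only [Fintype.card_fin] using one_sub_div_card_sq_nonneg hW hG.nonempty hW_diag
  have hL : (0 : ℝ) < L := Nat.cast_pos.2 hG.nonempty.some.pos
  have hhalf : η / (2 * (L : ℝ) ^ 2) ≤ η / (L : ℝ) ^ 2 := by
    gcongr
    linarith [sq_nonneg (L : ℝ)]
  calc ((W ^ s) i j - 1 / (L : ℝ)) ^ 2 ≤ ∑ k, ((W ^ s) k j - 1 / (L : ℝ)) ^ 2 :=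
        single_le_sum (f := fun k => ((W ^ s) k j - 1 / L) ^ 2) (fun k _ => sq_nonneg _)
          (mem_univ i)
    _ ≤ (1 - η / (L : ℝ) ^ 2) ^ s := by
        simpa only [Fintype.card_fin] using
          sum_sq_pow_apply_sub_inv_card_le hW hG hη hW_diag hW_adj j s
    _ ≤ (1 - η / (2 * (L : ℝ) ^ 2)) ^ s := by gcongr
    _ ≤ (1 - η / (2 * (L : ℝ) ^ 2)) ^ (s - 1) :=
        pow_le_pow_of_le_one (by linarith) (sub_le_self _ (by positivity)) (Nat.sub_le s 1)

/-- for a doubly stochastic weight matrix compatible with a connected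
communication graph, every entry of `W^s` is close to `1/L`:
`([W^s]_{ij} − 1/L)² ≤ (1 − η/(2L²))^{s−1}`. -/
theorem doubly_stochastic_power_entry_bound
    (L : ℕ) (G : SimpleGraph (Fin L)) (hG : G.Connected)
    (η : ℝ) (hη : 0 < η) (W : Matrix (Fin L) (Fin L) ℝ)
    (hW_nonneg : ∀ i j, 0 ≤ W i j)
    (hW_row : ∀ i, ∑ j, W i j = 1)
    (hW_col : ∀ j, ∑ i, W i j = 1)
    (hW_diag : ∀ i, η ≤ W i i)
    (hW_adj : ∀ i j, G.Adj i j → η ≤ W i j)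
    (hW_zero : ∀ i j, i ≠ j → ¬ G.Adj i j → W i j = 0) :
    ∀ s : ℕ, 1 ≤ s → ∀ i j,
      ((W ^ s) i j - 1 / (L : ℝ)) ^ 2 ≤ (1 - η / (2 * (L : ℝ) ^ 2)) ^ (s - 1) :=
  doubly_stochastic_power_entry_bound_general L G hG η hη W hW_nonneg hW_row hW_col hW_diag hW_adj
end

section
/- Let G be a connected undirected graph on the vertex set {1,…,L}, let η > 0, and let W ∈ ℝ^{L×L} be a doubly stochastic matrix such that w_{ii} ≥ η for all i, w_{ij} ≥ η whenever {i,j} is an edge of G, and w_{ij} = 0 whenever i ≠ j and {i,j} is not an edge of G. Let J ∈ ℝ^{L×L} denote the all-ones matrix and set c_w := 1 − η/(4L²). Then for every integer τ ≥ 1, ‖W^τ − (1/L)·J‖_F ≤ L · c_w^{τ−1}. -/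
/-!
For `z` with zero sum, double stochasticity gives
`‖z‖² - ‖W z‖² = ∑ₖ ∑ⱼ wₖⱼ (zⱼ - (W z)ₖ)²`. Keeping only the diagonal and the edges of `G`,
where `wₖⱼ ≥ η`, this is at least `η` times the deviation of `z` from its local averages
`W z`. Telescoping along a path of length `< L` and Cauchy–Schwarz bound each
`(z u - z v)²` by `2L` times that deviation; as `‖z‖² = (2L)⁻¹ ∑ᵤ ∑ᵥ (z u - z v)²`,
`‖z‖²` is at most `L²` times it.
So `W` shrinks zero-sum vectors by `√(1 - η/L²) ≤ c_w`. Every column of `W^τ - J/L` sums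
to zero and `W^(τ+1) - J/L = W (W^τ - J/L)`, while `‖W - J/L‖_F ≤ L`.
-/

open Matrix Finset

attribute [local instance] Matrix.frobeniusSeminormedAddCommGroup
  Matrix.frobeniusNormedAddCommGroup

lemma sum_sum_sub_sq {ι : Type*} [Fintype ι] (z : ι → ℝ) :
    ∑ u, ∑ v, (z u - z v) ^ 2 = 2 * (Fintype.card ι * ∑ u, z u ^ 2 - (∑ u, z u) ^ 2) := by
  simp only [sub_sq, sum_add_distrib, sum_sub_distrib, sum_const, card_univ, nsmul_eq_mul,
    mul_assoc, ← mul_sum, ← sum_mul]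
  ring

lemma frobenius_norm_sq {m n : Type*} [Fintype m] [Fintype n] (A : Matrix m n ℝ) :
    ‖A‖ ^ 2 = ∑ i, ∑ j, A i j ^ 2 := by
  rw [frobenius_norm_def, ← Real.sqrt_eq_rpow, Real.sq_sqrt (by positivity)]
  simp only [Real.rpow_two, Real.norm_eq_abs, sq_abs]

lemma norm_mul_le_of_sum_col_eq_zero {ι κ : Type*} [Fintype ι] [Fintype κ] {W : Matrix ι ι ℝ}
    {c : ℝ} (hc : 0 ≤ c)
    (hW : ∀ z : ι → ℝ, ∑ i, z i = 0 → ∑ i, (W *ᵥ z) i ^ 2 ≤ c ^ 2 * ∑ i, z i ^ 2)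
    {M : Matrix ι κ ℝ} (hM : ∀ j, ∑ i, M i j = 0) :
    ‖W * M‖ ≤ c * ‖M‖ := by
  refine (pow_le_pow_iff_left₀ (norm_nonneg _) (by positivity) two_ne_zero).1 ?_
  rw [mul_pow, frobenius_norm_sq, frobenius_norm_sq, sum_comm,
    sum_comm (f := fun i j => M i j ^ 2), mul_sum]
  exact sum_le_sum fun j _ => hW (fun i => M i j) (hM j)

namespace SimpleGraph

variable {ι : Type*} [Fintype ι]

lemma Walk.IsPath.sum_range_getVert_le_s5 {G : SimpleGraph ι} {u v : ι} {p : G.Walk u v}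
    (hp : p.IsPath) {f : ι → ℝ} (hf : ∀ a, 0 ≤ f a) :
    ∑ i ∈ range p.length, f (p.getVert i) ≤ ∑ a, f a := by
  classical
  have hinj : Set.InjOn p.getVert (range p.length) := fun i hi j hj =>
    hp.getVert_injOn (le_of_lt (mem_range.1 hi)) (le_of_lt (mem_range.1 hj))
  rw [← sum_image hinj]
  exact sum_le_sum_of_subset_of_nonneg (subset_univ _) fun a _ _ => hf a

variable (G : SimpleGraph ι) [DecidableRel G.Adj]

def localDeviation (z y : ι → ℝ) (a : ι) : ℝ :=
  (z a - y a) ^ 2 + ∑ b ∈ G.neighborFinset a, (z b - y a) ^ 2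

variable {G}

lemma localDeviation_nonneg (z y : ι → ℝ) (a : ι) : 0 ≤ G.localDeviation z y a := by
  unfold localDeviation; positivity

lemma mul_localDeviation_le_sum {W : Matrix ι ι ℝ} {η : ℝ} (hW : ∀ i j, 0 ≤ W i j)
    (hdiag : ∀ i, η ≤ W i i) (hadj : ∀ i j, G.Adj i j → η ≤ W i j) (z y : ι → ℝ) (k : ι) :
    η * G.localDeviation z y k ≤ ∑ j, W k j * (z j - y k) ^ 2 := by
  classical
  calc η * G.localDeviation z y k
      ≤ W k k * (z k - y k) ^ 2 + ∑ j ∈ G.neighborFinset k, W k j * (z j - y k) ^ 2 := by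
        rw [localDeviation, mul_add, mul_sum]
        gcongr with j hj
        · exact hdiag k
        · exact hadj k j ((mem_neighborFinset G k j).1 hj)
    _ = ∑ j ∈ insert k (G.neighborFinset k), W k j * (z j - y k) ^ 2 := by
        rw [sum_insert (notMem_neighborFinset_self G k)]
    _ ≤ ∑ j, W k j * (z j - y k) ^ 2 :=
        sum_le_sum_of_subset_of_nonneg (subset_univ _) fun j _ _ =>
          mul_nonneg (hW k j) (sq_nonneg _)

lemma sq_sub_le_two_mul_localDeviation {a b : ι} (hab : G.Adj a b) (z y : ι → ℝ) :
    (z a - z b) ^ 2 ≤ 2 * G.localDeviation z y a := by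
  have hb : (z b - y a) ^ 2 ≤ ∑ c ∈ G.neighborFinset a, (z c - y a) ^ 2 :=
    single_le_sum (fun c _ => sq_nonneg (z c - y a)) ((mem_neighborFinset G a b).2 hab)
  rw [localDeviation]
  nlinarith [sq_nonneg (z a - y a + (z b - y a))]

lemma Walk.IsPath.sq_sub_le {u v : ι} {p : G.Walk u v} (hp : p.IsPath) (z y : ι → ℝ) :
    (z u - z v) ^ 2 ≤ 2 * p.length * ∑ a, G.localDeviation z y a := by
  have htelescope :
      z u - z v = ∑ i ∈ range p.length, (z (p.getVert i) - z (p.getVert (i + 1))) := by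
    rw [sum_range_sub' (fun i => z (p.getVert i)), p.getVert_zero, p.getVert_length]
  calc (z u - z v) ^ 2
      ≤ p.length * ∑ i ∈ range p.length, (z (p.getVert i) - z (p.getVert (i + 1))) ^ 2 := by
        simpa [htelescope] using sq_sum_le_card_mul_sum_sq (s := range p.length)
          (f := fun i => z (p.getVert i) - z (p.getVert (i + 1)))
    _ ≤ p.length * ∑ i ∈ range p.length, 2 * G.localDeviation z y (p.getVert i) := by
        gcongr with i hi
        exact sq_sub_le_two_mul_localDeviation (p.adj_getVert_succ (mem_range.1 hi)) z y
    _ = 2 * p.length * ∑ i ∈ range p.length, G.localDeviation z y (p.getVert i) := by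
        rw [← mul_sum]; ring
    _ ≤ 2 * p.length * ∑ a, G.localDeviation z y a := by
        gcongr
        exact hp.sum_range_getVert_le_s5 (localDeviation_nonneg z y)

lemma Connected.sq_sub_le (hG : G.Connected) (z y : ι → ℝ) (u v : ι) :
    (z u - z v) ^ 2 ≤ 2 * Fintype.card ι * ∑ a, G.localDeviation z y a := by
  obtain ⟨p, hp⟩ := hG.exists_isPath u v
  refine (hp.sq_sub_le z y).trans ?_
  gcongr
  · exact sum_nonneg fun a _ => localDeviation_nonneg z y a
  · exact hp.length_lt.le

lemma Connected.sum_sq_le (hG : G.Connected) {z : ι → ℝ} (hz : ∑ i, z i = 0) (y : ι → ℝ) :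
    ∑ i, z i ^ 2 ≤ Fintype.card ι ^ 2 * ∑ a, G.localDeviation z y a := by
  set n : ℝ := (Fintype.card ι : ℝ)
  set D := ∑ a, G.localDeviation z y a
  have hn : 0 < n := Nat.cast_pos.2 (Fintype.card_pos_iff.2 hG.nonempty)
  have hpairs : 2 * n * ∑ i, z i ^ 2 ≤ 2 * n * (n ^ 2 * D) :=
    calc 2 * n * ∑ i, z i ^ 2 = ∑ u, ∑ v, (z u - z v) ^ 2 := by
          rw [sum_sum_sub_sq, hz]; ring
      _ ≤ ∑ _u : ι, ∑ _v : ι, 2 * n * D :=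
          sum_le_sum fun u _ => sum_le_sum fun v _ => hG.sq_sub_le z y u v
      _ = 2 * n * (n ^ 2 * D) := by simp only [sum_const, card_univ, nsmul_eq_mul, n]; ring
  exact le_of_mul_le_mul_left hpairs (by positivity)

end SimpleGraph

section DoublyStochastic

variable {ι : Type*} [Fintype ι] [DecidableEq ι] {W : Matrix ι ι ℝ}

lemma sum_sq_sub_sum_sq_mulVec_of_mem_doublyStochastic_s5 (hW : W ∈ doublyStochastic ℝ ι)
    (z : ι → ℝ) :
    ∑ i, z i ^ 2 - ∑ i, (W *ᵥ z) i ^ 2 = ∑ k, ∑ j, W k j * (z j - (W *ᵥ z) k) ^ 2 := by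
  have hrow (k : ι) :
      ∑ j, W k j * (z j - (W *ᵥ z) k) ^ 2 = ∑ j, W k j * z j ^ 2 - (W *ᵥ z) k ^ 2 := by
    set y := (W *ᵥ z) k
    have hWz : ∑ j, W k j * z j = y := rfl
    calc ∑ j, W k j * (z j - y) ^ 2
        = ∑ j, W k j * z j ^ 2 - 2 * y * ∑ j, W k j * z j + y ^ 2 * ∑ j, W k j := by
          simp only [mul_sum, ← sum_sub_distrib, ← sum_add_distrib]
          exact sum_congr rfl fun j _ => by ring
      _ = ∑ j, W k j * z j ^ 2 - y ^ 2 := by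
          rw [hWz, sum_row_of_mem_doublyStochastic hW]; ring
  rw [sum_congr rfl fun k _ => hrow k, sum_sub_distrib, sum_comm]
  simp only [← sum_mul, sum_col_of_mem_doublyStochastic hW, one_mul]

lemma SimpleGraph.Connected.sum_sq_mulVec_le {G : SimpleGraph ι} (hG : G.Connected) {η : ℝ}
    (hη : 0 ≤ η) (hW : W ∈ doublyStochastic ℝ ι) (hdiag : ∀ i, η ≤ W i i)
    (hadj : ∀ i j, G.Adj i j → η ≤ W i j) {z : ι → ℝ} (hz : ∑ i, z i = 0) :
    ∑ i, (W *ᵥ z) i ^ 2 ≤ (1 - η / Fintype.card ι ^ 2) * ∑ i, z i ^ 2 := by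
  classical
  set D := ∑ a, G.localDeviation z (W *ᵥ z) a
  have hn : (0 : ℝ) < Fintype.card ι :=
    Nat.cast_pos.2 (Fintype.card_pos_iff.2 hG.nonempty)
  have hgap : η * D ≤ ∑ i, z i ^ 2 - ∑ i, (W *ᵥ z) i ^ 2 := by
    rw [sum_sq_sub_sum_sq_mulVec_of_mem_doublyStochastic_s5 hW, mul_sum]
    exact sum_le_sum fun k _ => SimpleGraph.mul_localDeviation_le_sum
      (mem_doublyStochastic.1 hW).1 hdiag hadj z _ k
  have hpoincare : η / Fintype.card ι ^ 2 * ∑ i, z i ^ 2 ≤ η * D :=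
    calc η / Fintype.card ι ^ 2 * ∑ i, z i ^ 2
        ≤ η / Fintype.card ι ^ 2 * (Fintype.card ι ^ 2 * D) := by
          gcongr; exact hG.sum_sq_le hz _
      _ = η * D := by field_simp
  linarith

lemma mul_of_const_of_mem_doublyStochastic (hW : W ∈ doublyStochastic ℝ ι) (c : ℝ) :
    W * of (fun _ _ => c) = of fun _ _ => c := by
  ext i j
  simp [mul_apply, ← sum_mul, sum_row_of_mem_doublyStochastic hW]

lemma norm_sub_of_inv_card_le_of_mem_doublyStochastic (hW : W ∈ doublyStochastic ℝ ι) :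
    ‖W - of (fun _ _ => (Fintype.card ι : ℝ)⁻¹)‖ ≤ Fintype.card ι := by
  refine (pow_le_pow_iff_left₀ (norm_nonneg _) (by positivity) two_ne_zero).1 ?_
  rw [frobenius_norm_sq]
  refine (sum_le_sum fun i _ => sum_le_sum fun j _ => (?_ : _ ≤ (1 : ℝ))).trans ?_
  · have hn : (1 : ℝ) ≤ Fintype.card ι := Nat.one_le_cast.2 (Fintype.card_pos_iff.2 ⟨i⟩)
    have hinv : (Fintype.card ι : ℝ)⁻¹ ≤ 1 := inv_le_one_of_one_le₀ hn
    have hWij_le := le_one_of_mem_doublyStochastic hW (i := i) (j := j)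
    have hWij_nonneg := nonneg_of_mem_doublyStochastic hW (i := i) (j := j)
    rw [Matrix.sub_apply, of_apply, sq_le_one_iff_abs_le_one, abs_le]
    constructor <;> linarith [inv_nonneg.2 (zero_le_one.trans hn)]
  · simp [sq]

theorem SimpleGraph.Connected.norm_pow_succ_sub_of_inv_card_le {G : SimpleGraph ι}
    (hG : G.Connected) {η : ℝ} (hη : 0 < η) (hW : W ∈ doublyStochastic ℝ ι)
    (hdiag : ∀ i, η ≤ W i i) (hadj : ∀ i j, G.Adj i j → η ≤ W i j) (k : ℕ) :
    ‖W ^ (k + 1) - of (fun _ _ => (Fintype.card ι : ℝ)⁻¹)‖ ≤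
      Fintype.card ι * (1 - η / (4 * Fintype.card ι ^ 2)) ^ k := by
  set A : Matrix ι ι ℝ := of fun _ _ => (Fintype.card ι : ℝ)⁻¹
  set c := 1 - η / (4 * (Fintype.card ι : ℝ) ^ 2) with hc_def
  have hn : (1 : ℝ) ≤ Fintype.card ι := Nat.one_le_cast.2 (Fintype.card_pos_iff.2 hG.nonempty)
  have hη1 : η ≤ 1 := (hdiag hG.nonempty.some).trans (le_one_of_mem_doublyStochastic hW)
  have hc : 0 ≤ c := by
    have : η / (4 * (Fintype.card ι : ℝ) ^ 2) ≤ 1 :=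
      (div_le_one (by positivity)).2 (by nlinarith)
    linarith
  have hcontract (M : Matrix ι ι ℝ) (hM : ∀ j, ∑ i, M i j = 0) : ‖W * M‖ ≤ c * ‖M‖ := by
    refine norm_mul_le_of_sum_col_eq_zero hc (fun z hz => ?_) hM
    refine (hG.sum_sq_mulVec_le hη.le hW hdiag hadj hz).trans ?_
    have hquarter : η / (4 * (Fintype.card ι : ℝ) ^ 2) = η / (Fintype.card ι : ℝ) ^ 2 / 4 := by
      ring
    gcongr
    -- `(1 - x/4)² = 1 - x/2 + x²/16 ≥ 1 - x` for `x = η / n² ≥ 0`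
    rw [hc_def, hquarter]
    nlinarith [div_nonneg hη.le (sq_nonneg (Fintype.card ι : ℝ))]
  have hcol (k : ℕ) (j : ι) : ∑ i, (W ^ (k + 1) - A) i j = 0 := by
    simp [A, sum_sub_distrib, sum_col_of_mem_doublyStochastic (pow_mem hW _),
      (zero_lt_one.trans_le hn).ne']
  induction k with
  | zero => simpa using norm_sub_of_inv_card_le_of_mem_doublyStochastic hW
  | succ k ih =>
    calc ‖W ^ (k + 2) - A‖ = ‖W * (W ^ (k + 1) - A)‖ := by
          rw [mul_sub, mul_of_const_of_mem_doublyStochastic hW, ← pow_succ']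
      _ ≤ c * (Fintype.card ι * c ^ k) := (hcontract _ (hcol k)).trans (by gcongr)
      _ = Fintype.card ι * c ^ (k + 1) := by ring

theorem doubly_stochastic_power_frobenius_bound_general
    (L : ℕ) (G : SimpleGraph (Fin L)) (hG : G.Connected)
    (η : ℝ) (hη : 0 < η) (W : Matrix (Fin L) (Fin L) ℝ)
    (hW_nonneg : ∀ i j, 0 ≤ W i j)
    (hW_row : ∀ i, ∑ j, W i j = 1)
    (hW_col : ∀ j, ∑ i, W i j = 1)
    (hW_diag : ∀ i, η ≤ W i i)
    (hW_adj : ∀ i j, G.Adj i j → η ≤ W i j)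
    (J : Matrix (Fin L) (Fin L) ℝ) (hJ : J = Matrix.of fun _ _ => (1 : ℝ))
    (cw : ℝ) (hcw : cw = 1 - η / (4 * (L : ℝ) ^ 2)) :
    ∀ τ : ℕ, 1 ≤ τ →
      ‖W ^ τ - (1 / (L : ℝ)) • J‖ ≤ (L : ℝ) * cw ^ (τ - 1) := by
  intro τ hτ
  obtain ⟨k, rfl⟩ := Nat.exists_eq_add_of_le' hτ
  have hW : W ∈ doublyStochastic ℝ (Fin L) :=
    mem_doublyStochastic_iff_sum.2 ⟨hW_nonneg, hW_row, hW_col⟩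
  have hJ' : (1 / (L : ℝ)) • J = of fun _ _ => (Fintype.card (Fin L) : ℝ)⁻¹ := by
    subst hJ; ext; simp
  rw [hJ', hcw, Nat.add_sub_cancel]
  simpa using hG.norm_pow_succ_sub_of_inv_card_le hη hW hW_diag hW_adj k

/-- Frobenius-norm contraction of the powers of a doubly stochastic
matrix compatible with a connected graph towards the averaging matrix `(1/L)·J`:
`‖W^τ − (1/L)J‖_F ≤ L · c_w^{τ−1}` with `c_w = 1 − η/(4L²)`. -/
theorem doubly_stochastic_power_frobenius_bound
    (L : ℕ) (G : SimpleGraph (Fin L)) (hG : G.Connected)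
    (η : ℝ) (hη : 0 < η) (W : Matrix (Fin L) (Fin L) ℝ)
    (hW_nonneg : ∀ i j, 0 ≤ W i j)
    (hW_row : ∀ i, ∑ j, W i j = 1)
    (hW_col : ∀ j, ∑ i, W i j = 1)
    (hW_diag : ∀ i, η ≤ W i i)
    (hW_adj : ∀ i j, G.Adj i j → η ≤ W i j)
    (hW_zero : ∀ i j, i ≠ j → ¬ G.Adj i j → W i j = 0)
    (J : Matrix (Fin L) (Fin L) ℝ) (hJ : J = Matrix.of fun _ _ => (1 : ℝ))
    (cw : ℝ) (hcw : cw = 1 - η / (4 * (L : ℝ) ^ 2)) :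
    ∀ τ : ℕ, 1 ≤ τ →
      ‖W ^ τ - (1 / (L : ℝ)) • J‖ ≤ (L : ℝ) * cw ^ (τ - 1) :=
  doubly_stochastic_power_frobenius_bound_general L G hG η hη W hW_nonneg hW_row hW_col hW_diag
    hW_adj J hJ cw hcw
end DoublyStochastic
end

section
/- Let W ∈ ℝ^{L×L} be a doubly stochastic matrix, let J ∈ ℝ^{L×L} be the all-ones matrix, let e : ℕ → ℝ^{L×n}, and suppose x̄ : ℕ → ℝ^{L×n} satisfies x̄(t) = W · x̄(t−1) + e(t) for all t > t_q. Then for every p ≥ 1, with t = t_q + p: x̄(t) − (1/L)·J·x̄(t) = (W^p − (1/L)·J) · x̄(t_q) + Σ_{τ=1}^{p−1} (W^τ − (1/L)·J) · e(t − τ) + (I − (1/L)·J) · e(t). -/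
open Matrix Finset

/-- deviation of the perturbed consensus iterates from the row
average, in unrolled form, for a doubly stochastic weight matrix. -/
theorem perturbed_consensus_deviation_from_average
    (L n tq : ℕ) (W : Matrix (Fin L) (Fin L) ℝ)
    (hW_nonneg : ∀ i j, 0 ≤ W i j)
    (hW_row : ∀ i, ∑ j, W i j = 1)
    (hW_col : ∀ j, ∑ i, W i j = 1)
    (J : Matrix (Fin L) (Fin L) ℝ) (hJ : J = Matrix.of fun _ _ => (1 : ℝ))
    (e xbar : ℕ → Matrix (Fin L) (Fin n) ℝ)
    (hrec : ∀ t : ℕ, tq < t → xbar t = W * xbar (t - 1) + e t) :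
    ∀ p : ℕ, 1 ≤ p →
      xbar (tq + p) - ((1 / (L : ℝ)) • J) * xbar (tq + p)
        = (W ^ p - (1 / (L : ℝ)) • J) * xbar tq
          + ∑ τ ∈ Finset.Icc 1 (p - 1), (W ^ τ - (1 / (L : ℝ)) • J) * e (tq + p - τ)
          + (1 - (1 / (L : ℝ)) • J) * e (tq + p) := by
  intro p hp
  set M : Matrix (Fin L) (Fin L) ℝ := (1 / (L : ℝ)) • J with hM
  have hJW : J * W = J := by
    subst hJ
    ext i j
    simp [Matrix.mul_apply, hW_col]
  have hMW : M * W = M := by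
    rw [hM, Matrix.smul_mul, hJW]
  have hMpow : ∀ k : ℕ, M * W ^ k = M := by
    intro k
    induction k with
    | zero => simp
    | succ k ih => rw [pow_succ, ← Matrix.mul_assoc, ih, hMW]
  have hunroll : ∀ q : ℕ, xbar (tq + q) =
      W ^ q * xbar tq + ∑ τ ∈ Finset.range q, W ^ τ * e (tq + q - τ) := by
    intro q
    induction q with
    | zero => simp
    | succ q ih =>
      have h1 : xbar (tq + (q + 1)) = W * xbar (tq + q) + e (tq + (q + 1)) := by
        have h := hrec (tq + (q + 1)) (by omega)
        simpa [show tq + (q + 1) - 1 = tq + q by omega] using h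
      have hidx : ∀ i : ℕ, tq + (q + 1) - (i + 1) = tq + q - i := fun i => by omega
      rw [h1, ih, Matrix.mul_add, Matrix.mul_sum, Finset.sum_range_succ']
      simp only [← Matrix.mul_assoc, ← pow_succ', hidx, pow_zero, Matrix.one_mul]
      abel
  obtain ⟨q, rfl⟩ : ∃ q, p = q + 1 := ⟨p - 1, by omega⟩
  rw [hunroll (q + 1)]
  have hidx : ∀ i : ℕ, tq + (q + 1) - (i + 1) = tq + q - i := fun i => by omega
  have hIcc : ∑ τ ∈ Finset.Icc 1 (q + 1 - 1), (W ^ τ - M) * e (tq + (q + 1) - τ)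
      = ∑ i ∈ Finset.range q, (W ^ (i + 1) - M) * e (tq + q - i) := by
    rw [show q + 1 - 1 = q from rfl, ← Finset.Ico_add_one_right_eq_Icc, Finset.sum_Ico_eq_sum_range]
    refine Finset.sum_congr (by simp) fun i _ => by
      rw [show 1 + i = i + 1 by omega, hidx i]
  rw [hIcc, Finset.sum_range_succ']
  simp only [hidx, Nat.sub_zero, pow_zero, Matrix.one_mul, Matrix.mul_add, Matrix.mul_sum,
    ← Matrix.mul_assoc, hMpow, Matrix.sub_mul, Finset.sum_sub_distrib,
    Matrix.one_mul]
  abel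
end

section
/- Let G be a connected undirected graph on {1,…,L}, η > 0, and W ∈ ℝ^{L×L} a doubly stochastic matrix such that w_{ii} ≥ η for all i, w_{ij} ≥ η whenever {i,j} is an edge of G, and w_{ij} = 0 whenever i ≠ j and {i,j} is not an edge of G; set c_w := 1 − η/(4L²). Let e : ℕ → ℝ^{L×n} and suppose x̄ : ℕ → ℝ^{L×n} satisfies x̄(t) = W·x̄(t−1) + e(t) for all t > t_q. Then for every p ≥ 1, with t = t_q + p and J the all-ones L×L matrix: ‖x̄(t) − (1/L)·J·x̄(t)‖_F ≤ L·c_w^{p−1}·‖x̄(t_q)‖_F + L·Σ_{τ=1}^{p−1} c_w^{τ−1}·‖e(t−τ)‖_F + √(L−1)·‖e(t)‖_F. -/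
open Matrix Finset

attribute [local instance] Matrix.frobeniusSeminormedAddCommGroup
  Matrix.frobeniusNormedAddCommGroup

/-
With `P = 1 - J / L`, double stochasticity of `W` makes `P` commute with `W`, and `P M` has
zero column sums. For a zero-sum column `v`, `‖W v‖² = ‖v‖² - ∑ᵢ Varᵢ`, where `Varᵢ` is the
variance of `v` under the weights of row `i`. An edge `{i, j}` forces `Varᵢ ≥ η (vᵢ - vⱼ)² / 2`,
and Cauchy–Schwarz along a path from a maximum to a minimum of `v` turns this into
`∑ᵢ Varᵢ ≥ η ‖v‖² / (2 L²)`. Since `1 - η / (2 L²) ≤ c_w²`, this gives `‖W P M‖ ≤ c_w ‖P M‖`,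
and unrolling `‖P x̄(t)‖ ≤ c_w ‖P x̄(t - 1)‖ + ‖P e(t)‖` yields the bound; the remaining
factors only need `c_w ≤ L`, `‖P M‖ ≤ ‖M‖`, and `P = 0` when `L = 1`.
-/

theorem List.sq_sum_map_le_length_mul_sum_map_sq {α R : Type*} [Semiring R] [LinearOrder R]
    [IsStrictOrderedRing R] [ExistsAddOfLE R] (l : List α) (f : α → R) :
    (l.map f).sum ^ 2 ≤ l.length * (l.map fun x => f x ^ 2).sum := by
  rw [← Fin.sum_univ_fun_getElem, ← Fin.sum_univ_fun_getElem]
  simpa using sq_sum_le_card_mul_sum_sq (s := univ) (f := fun i : Fin l.length => f l[i.1])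

namespace SimpleGraph

variable {V : Type*} {G : SimpleGraph V}

theorem Walk.sum_darts_sub {R : Type*} [AddCommGroup R] (v : V → R) {a b : V}
    (p : G.Walk a b) : (p.darts.map fun d => v d.fst - v d.snd).sum = v a - v b := by
  induction p with
  | nil => simp
  | cons h q ih => simp [ih]

theorem Connected.sq_sub_le_card_mul_sum_s8 [Fintype V] (hG : G.Connected) {v T : V → ℝ}
    (hT : ∀ i, 0 ≤ T i) (hadj : ∀ i j, G.Adj i j → (v i - v j) ^ 2 ≤ T i) (a b : V) :
    (v a - v b) ^ 2 ≤ Fintype.card V * ∑ i, T i := by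
  classical
  obtain ⟨p, hp⟩ := (hG.preconnected a b).exists_isPath
  have hfst : (p.darts.map (·.fst)).Nodup := by
    rw [Walk.map_fst_darts]
    exact hp.support_nodup.sublist (List.dropLast_sublist _)
  calc (v a - v b) ^ 2 = (p.darts.map fun d => v d.fst - v d.snd).sum ^ 2 := by
        rw [p.sum_darts_sub]
    _ ≤ p.darts.length * (p.darts.map fun d => (v d.fst - v d.snd) ^ 2).sum :=
        List.sq_sum_map_le_length_mul_sum_map_sq _ _
    _ ≤ Fintype.card V * ((p.darts.map (·.fst)).map T).sum := by
        gcongr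
        · exact List.sum_nonneg (by simp only [List.mem_map]; rintro _ ⟨d, -, rfl⟩; positivity)
        · rw [Walk.length_darts]; exact_mod_cast hp.length_lt.le
        · rw [List.map_map]; exact List.sum_le_sum fun d _ => hadj _ _ d.adj
    _ ≤ Fintype.card V * ∑ i, T i := by
        rw [← List.sum_toFinset _ hfst]
        exact mul_le_mul_of_nonneg_left (sum_le_univ_sum_of_nonneg hT) (Nat.cast_nonneg _)

end SimpleGraph

section Weights

variable {ι : Type*} [Fintype ι]

theorem sum_mul_sq_sub_sq_sum_mul_eq {w : ι → ℝ} (hw : ∑ j, w j = 1) (v : ι → ℝ) :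
    ∑ j, w j * v j ^ 2 - (∑ j, w j * v j) ^ 2 = ∑ j, w j * (v j - ∑ k, w k * v k) ^ 2 := by
  set m := ∑ k, w k * v k
  have hexpand : ∀ j, w j * (v j - m) ^ 2 = w j * v j ^ 2 - 2 * m * (w j * v j) + m ^ 2 * w j :=
    fun j => by ring
  simp only [hexpand, sum_add_distrib, sum_sub_distrib, ← mul_sum, hw]
  ring

theorem mul_sq_sub_le_sum_mul_sq_sub {w v : ι → ℝ} {η m : ℝ} {i j : ι} (hη : 0 ≤ η)
    (hw : ∀ k, 0 ≤ w k) (hij : i ≠ j) (hi : η ≤ w i) (hj : η ≤ w j) :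
    η / 2 * (v i - v j) ^ 2 ≤ ∑ k, w k * (v k - m) ^ 2 := by
  classical
  have hpair : w i * (v i - m) ^ 2 + w j * (v j - m) ^ 2 ≤ ∑ k, w k * (v k - m) ^ 2 := by
    rw [← sum_pair (f := fun k => w k * (v k - m) ^ 2) hij]
    exact sum_le_univ_sum_of_nonneg fun k => mul_nonneg (hw k) (sq_nonneg _)
  have hsq : (v i - v j) ^ 2 ≤ 2 * ((v i - m) ^ 2 + (v j - m) ^ 2) := by
    nlinarith [sq_nonneg (v i + v j - 2 * m)]
  nlinarith [mul_le_mul_of_nonneg_right hi (sq_nonneg (v i - m)),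
    mul_le_mul_of_nonneg_right hj (sq_nonneg (v j - m)), mul_le_mul_of_nonneg_left hsq hη]

theorem sum_sq_le_card_mul_sq_sub {v : ι → ℝ} (hv : ∑ i, v i = 0) {a b : ι}
    (ha : ∀ i, v i ≤ v a) (hb : ∀ i, v b ≤ v i) :
    ∑ i, v i ^ 2 ≤ Fintype.card ι * (v a - v b) ^ 2 := by
  have hcard : (0 : ℝ) < Fintype.card ι := by exact_mod_cast Fintype.card_pos_iff.2 ⟨a⟩
  have hva : 0 ≤ v a := by
    have := sum_le_card_nsmul univ v (v a) fun i _ => ha i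
    rw [hv, card_univ, nsmul_eq_mul] at this
    exact nonneg_of_mul_nonneg_right this hcard
  have hvb : v b ≤ 0 := by
    have := card_nsmul_le_sum univ v (v b) fun i _ => hb i
    rw [hv, card_univ, nsmul_eq_mul] at this
    exact nonpos_of_mul_nonpos_right this hcard
  have := sum_le_card_nsmul univ (fun i => v i ^ 2) ((v a - v b) ^ 2) fun i _ => by
    nlinarith [ha i, hb i]
  rwa [card_univ, nsmul_eq_mul] at this

end Weights

theorem Matrix.frobenius_norm_sq_eq_sum_col {m n : Type*} [Fintype m] [Fintype n]
    (M : Matrix m n ℝ) : ‖M‖ ^ 2 = ∑ j, ∑ i, M i j ^ 2 := by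
  rw [frobenius_norm_def, ← Real.rpow_natCast, ← Real.rpow_mul (by positivity), sum_comm]
  norm_num

theorem Matrix.frobenius_norm_le_mul_of_sum_col_sq_le {m n : Type*} [Fintype m] [Fintype n]
    {N M : Matrix m n ℝ} {c : ℝ} (hc : 0 ≤ c) (h : ∀ j, ∑ i, N i j ^ 2 ≤ c ^ 2 * ∑ i, M i j ^ 2) :
    ‖N‖ ≤ c * ‖M‖ := by
  refine le_of_sq_le_sq ?_ (by positivity)
  rw [mul_pow, frobenius_norm_sq_eq_sum_col, frobenius_norm_sq_eq_sum_col, mul_sum]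
  exact sum_le_sum fun j _ => h j

noncomputable def centeringMatrix (ι : Type*) [Fintype ι] [DecidableEq ι] : Matrix ι ι ℝ :=
  1 - (1 / (Fintype.card ι : ℝ)) • of fun _ _ => 1

section Centering

variable {ι κ : Type*} [Fintype ι] [DecidableEq ι]

theorem centeringMatrix_mul_apply (M : Matrix ι κ ℝ) (i : ι) (j : κ) :
    (centeringMatrix ι * M) i j = M i j - (1 / (Fintype.card ι : ℝ)) * ∑ k, M k j := by
  simp [centeringMatrix, sub_mul, Matrix.mul_apply, mul_sum, Matrix.one_apply]

theorem sum_centeringMatrix_mul_apply [Nonempty ι] (M : Matrix ι κ ℝ) (j : κ) :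
    ∑ i, (centeringMatrix ι * M) i j = 0 := by
  simp only [centeringMatrix_mul_apply, sum_sub_distrib, sum_const, card_univ, nsmul_eq_mul]
  field_simp
  ring

theorem centeringMatrix_mul_comm {W : Matrix ι ι ℝ} (hrow : ∀ i, ∑ j, W i j = 1)
    (hcol : ∀ j, ∑ i, W i j = 1) : centeringMatrix ι * W = W * centeringMatrix ι := by
  have hWJ : W * (of fun _ _ => (1 : ℝ)) = of fun _ _ => 1 := by
    ext i j; simp [Matrix.mul_apply, hrow]
  have hJW : (of fun _ _ => (1 : ℝ)) * W = of fun _ _ => 1 := by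
    ext i j; simp [Matrix.mul_apply, hcol]
  simp only [centeringMatrix, sub_mul, mul_sub, Matrix.one_mul, Matrix.mul_one, smul_mul,
    Matrix.mul_smul, hWJ, hJW]

theorem norm_centeringMatrix_mul_le [Fintype κ] [Nonempty ι] (M : Matrix ι κ ℝ) :
    ‖centeringMatrix ι * M‖ ≤ ‖M‖ := by
  have hcard : (0 : ℝ) < Fintype.card ι := by exact_mod_cast Fintype.card_pos
  refine (one_mul ‖M‖).symm ▸ frobenius_norm_le_mul_of_sum_col_sq_le zero_le_one fun j => ?_
  have hdrop : ∑ i, (centeringMatrix ι * M) i j ^ 2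
      = ∑ i, M i j ^ 2 - (∑ i, M i j) ^ 2 / Fintype.card ι := by
    simp only [centeringMatrix_mul_apply, sub_sq, sum_add_distrib, sum_sub_distrib, ← sum_mul,
      ← mul_sum, sum_const, card_univ, nsmul_eq_mul]
    field_simp
    ring
  rw [hdrop, one_pow, one_mul]
  exact sub_le_self _ (by positivity)

theorem norm_centeringMatrix_mul_le_sqrt [Fintype κ] (M : Matrix ι κ ℝ) :
    ‖centeringMatrix ι * M‖ ≤ √(Fintype.card ι - 1) * ‖M‖ := by
  rcases le_or_gt (Fintype.card ι) 1 with hle | hlt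
  · have : Subsingleton ι := Fintype.card_le_one_iff_subsingleton.1 hle
    have hzero : centeringMatrix ι * M = 0 := by
      ext i j
      have : Fintype.card ι = 1 := Fintype.card_eq_one_iff.2 ⟨i, fun k => Subsingleton.elim k i⟩
      simp [centeringMatrix_mul_apply, this, Fintype.sum_subsingleton _ i]
    rw [hzero, norm_zero]
    positivity
  · have : Nonempty ι := Fintype.card_pos_iff.1 (by omega)
    have hsqrt : 1 ≤ √(Fintype.card ι - 1 : ℝ) := by
      rw [Real.one_le_sqrt, le_sub_iff_add_le]
      exact_mod_cast hlt
    calc ‖centeringMatrix ι * M‖ ≤ ‖M‖ := norm_centeringMatrix_mul_le M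
      _ ≤ √(Fintype.card ι - 1) * ‖M‖ := le_mul_of_one_le_left (norm_nonneg M) hsqrt

end Centering

theorem le_pow_mul_add_sum_of_le_mul_add {a b : ℕ → ℝ} {c : ℝ} (hc : 0 ≤ c)
    (h : ∀ k, a (k + 1) ≤ c * a k + b (k + 1)) :
    ∀ k, a k ≤ c ^ k * a 0 + ∑ s ∈ range k, c ^ s * b (k - s)
  | 0 => by simp
  | k + 1 =>
    calc a (k + 1) ≤ c * a k + b (k + 1) := h k
      _ ≤ c * (c ^ k * a 0 + ∑ s ∈ range k, c ^ s * b (k - s)) + b (k + 1) := by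
          gcongr; exact le_pow_mul_add_sum_of_le_mul_add hc h k
      _ = c ^ (k + 1) * a 0 + ∑ s ∈ range (k + 1), c ^ s * b (k + 1 - s) := by
          simp only [sum_range_succ', Nat.add_sub_add_right, Nat.sub_zero, pow_succ, mul_add,
            mul_sum]
          ring_nf

noncomputable def consensusRate (ι : Type*) [Fintype ι] (η : ℝ) : ℝ :=
  1 - η / (4 * Fintype.card ι ^ 2)

theorem consensusRate_le_one {ι : Type*} [Fintype ι] {η : ℝ} (hη : 0 ≤ η) :
    consensusRate ι η ≤ 1 :=
  sub_le_self _ (by positivity)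

namespace SimpleGraph

variable {ι : Type*} [Fintype ι]

structure IsConsensusMatrix (G : SimpleGraph ι) (η : ℝ) (W : Matrix ι ι ℝ) : Prop where
  nonneg : ∀ i j, 0 ≤ W i j
  sum_row : ∀ i, ∑ j, W i j = 1
  sum_col : ∀ j, ∑ i, W i j = 1
  le_diag : ∀ i, η ≤ W i i
  le_of_adj : ∀ i j, G.Adj i j → η ≤ W i j

namespace IsConsensusMatrix

variable {G : SimpleGraph ι} {η : ℝ} {W : Matrix ι ι ℝ}

theorem le_one [Nonempty ι] (hW : G.IsConsensusMatrix η W) : η ≤ 1 := by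
  obtain ⟨i⟩ := ‹Nonempty ι›
  calc η ≤ W i i := hW.le_diag i
    _ ≤ ∑ j, W i j := single_le_sum (fun j _ => hW.nonneg i j) (mem_univ i)
    _ = 1 := hW.sum_row i

theorem sum_sq_mulVec_le (hW : G.IsConsensusMatrix η W) (hG : G.Connected) (hη : 0 < η)
    {v : ι → ℝ} (hv : ∑ i, v i = 0) :
    ∑ i, (W *ᵥ v) i ^ 2 ≤ (1 - η / (2 * Fintype.card ι ^ 2)) * ∑ i, v i ^ 2 := by
  have : Nonempty ι := hG.nonempty
  set T : ι → ℝ := fun i => ∑ j, W i j * (v j - (W *ᵥ v) i) ^ 2 with hT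
  have hT_nonneg : ∀ i, 0 ≤ T i := fun i =>
    sum_nonneg fun j _ => mul_nonneg (hW.nonneg i j) (sq_nonneg _)
  have hdrop : ∑ i, (W *ᵥ v) i ^ 2 = ∑ i, v i ^ 2 - ∑ i, T i := by
    have hcol : ∑ i, ∑ j, W i j * v j ^ 2 = ∑ j, v j ^ 2 := by
      rw [sum_comm]; simp only [← sum_mul, hW.sum_col, one_mul]
    simp only [hT, mulVec, dotProduct, ← sum_mul_sq_sub_sq_sum_mul_eq (hW.sum_row _),
      sum_sub_distrib, hcol]
    ring
  obtain ⟨a, -, ha⟩ := exists_max_image univ v univ_nonempty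
  obtain ⟨b, -, hb⟩ := exists_min_image univ v univ_nonempty
  have hspread : (v a - v b) ^ 2 ≤ Fintype.card ι * ∑ i, (T i / (η / 2)) :=
    hG.sq_sub_le_card_mul_sum_s8 (v := v) (fun i => div_nonneg (hT_nonneg i) (by positivity))
      (fun i j hadj => (le_div_iff₀' (by positivity)).2 <| mul_sq_sub_le_sum_mul_sq_sub hη.le
        (hW.nonneg i) hadj.ne (hW.le_diag i) (hW.le_of_adj i j hadj)) a b
  have hN : (0 : ℝ) < Fintype.card ι := by exact_mod_cast Fintype.card_pos
  set N : ℝ := (Fintype.card ι : ℝ)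
  have hgap : η / (2 * N ^ 2) * ∑ i, v i ^ 2 ≤ ∑ i, T i :=
    calc η / (2 * N ^ 2) * ∑ i, v i ^ 2 ≤ η / (2 * N ^ 2) * (N * (v a - v b) ^ 2) := by
          gcongr
          exact sum_sq_le_card_mul_sq_sub hv (fun i => ha i (mem_univ i))
            (fun i => hb i (mem_univ i))
      _ ≤ η / (2 * N ^ 2) * (N * (N * ∑ i, (T i / (η / 2)))) := by gcongr
      _ = ∑ i, T i := by
          rw [← sum_div]
          field_simp
  rw [hdrop]
  linarith

theorem consensusRate_nonneg [Nonempty ι] (hW : G.IsConsensusMatrix η W) :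
    0 ≤ consensusRate ι η := by
  have hcard : (1 : ℝ) ≤ Fintype.card ι := by exact_mod_cast Fintype.card_pos
  rw [consensusRate, sub_nonneg, div_le_one (by positivity)]
  nlinarith [hW.le_one]

theorem norm_mul_le (hW : G.IsConsensusMatrix η W) (hG : G.Connected) (hη : 0 < η)
    {κ : Type*} [Fintype κ] {M : Matrix ι κ ℝ} (hM : ∀ j, ∑ i, M i j = 0) :
    ‖W * M‖ ≤ consensusRate ι η * ‖M‖ := by
  have : Nonempty ι := hG.nonempty
  refine frobenius_norm_le_mul_of_sum_col_sq_le hW.consensusRate_nonneg fun j => ?_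
  calc ∑ i, (W * M) i j ^ 2 = ∑ i, (W *ᵥ fun k => M k j) i ^ 2 := rfl
    _ ≤ (1 - η / (2 * Fintype.card ι ^ 2)) * ∑ i, M i j ^ 2 := hW.sum_sq_mulVec_le hG hη (hM j)
    _ ≤ consensusRate ι η ^ 2 * ∑ i, M i j ^ 2 := by
        gcongr
        have : consensusRate ι η ^ 2
            = 1 - η / (2 * Fintype.card ι ^ 2) + (η / (4 * Fintype.card ι ^ 2)) ^ 2 := by
          rw [consensusRate]; field_simp; ring
        nlinarith [sq_nonneg (η / (4 * Fintype.card ι ^ 2))]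

theorem norm_centeringMatrix_mul_add_le [DecidableEq ι] (hW : G.IsConsensusMatrix η W)
    (hG : G.Connected) (hη : 0 < η) {κ : Type*} [Fintype κ] (x e : Matrix ι κ ℝ) :
    ‖centeringMatrix ι * (W * x + e)‖
      ≤ consensusRate ι η * ‖centeringMatrix ι * x‖ + ‖centeringMatrix ι * e‖ := by
  have : Nonempty ι := hG.nonempty
  rw [Matrix.mul_add, ← Matrix.mul_assoc, centeringMatrix_mul_comm hW.sum_row hW.sum_col,
    Matrix.mul_assoc]
  exact (norm_add_le _ _).trans <| add_le_add_left
    (hW.norm_mul_le hG hη (sum_centeringMatrix_mul_apply x)) _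

theorem norm_centeringMatrix_mul_le_of_recurrence [DecidableEq ι] (hW : G.IsConsensusMatrix η W)
    (hG : G.Connected) (hη : 0 < η) {κ : Type*} [Fintype κ] {x e : ℕ → Matrix ι κ ℝ}
    (hrec : ∀ k, x (k + 1) = W * x k + e (k + 1)) (k : ℕ) :
    ‖centeringMatrix ι * x k‖ ≤ consensusRate ι η ^ k * ‖centeringMatrix ι * x 0‖
      + ∑ s ∈ range k, consensusRate ι η ^ s * ‖centeringMatrix ι * e (k - s)‖ :=
  have : Nonempty ι := hG.nonempty
  le_pow_mul_add_sum_of_le_mul_add (a := fun k => ‖centeringMatrix ι * x k‖)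
    (b := fun k => ‖centeringMatrix ι * e k‖) hW.consensusRate_nonneg
    (fun k => by simpa only [hrec k] using hW.norm_centeringMatrix_mul_add_le hG hη _ _) k

end IsConsensusMatrix

end SimpleGraph

theorem perturbed_consensus_deviation_frobenius_bound_general
    (L n tq : ℕ) (G : SimpleGraph (Fin L)) (hG : G.Connected)
    (η : ℝ) (hη : 0 < η) (W : Matrix (Fin L) (Fin L) ℝ)
    (hW_nonneg : ∀ i j, 0 ≤ W i j)
    (hW_row : ∀ i, ∑ j, W i j = 1)
    (hW_col : ∀ j, ∑ i, W i j = 1)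
    (hW_diag : ∀ i, η ≤ W i i)
    (hW_adj : ∀ i j, G.Adj i j → η ≤ W i j)
    (cw : ℝ) (hcw : cw = 1 - η / (4 * (L : ℝ) ^ 2))
    (J : Matrix (Fin L) (Fin L) ℝ) (hJ : J = Matrix.of fun _ _ => (1 : ℝ))
    (e xbar : ℕ → Matrix (Fin L) (Fin n) ℝ)
    (hrec : ∀ t : ℕ, tq < t → xbar t = W * xbar (t - 1) + e t) :
    ∀ p : ℕ, 1 ≤ p →
      ‖xbar (tq + p) - ((1 / (L : ℝ)) • J) * xbar (tq + p)‖
        ≤ (L : ℝ) * cw ^ (p - 1) * ‖xbar tq‖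
          + (L : ℝ) * ∑ τ ∈ Finset.Icc 1 (p - 1), cw ^ (τ - 1) * ‖e (tq + p - τ)‖
          + Real.sqrt ((L : ℝ) - 1) * ‖e (tq + p)‖ := by
  intro p hp
  obtain ⟨q, rfl⟩ := Nat.exists_eq_add_of_le' hp
  have : Nonempty (Fin L) := hG.nonempty
  have hW : G.IsConsensusMatrix η W := ⟨hW_nonneg, hW_row, hW_col, hW_diag, hW_adj⟩
  have hcw' : cw = consensusRate (Fin L) η := by rw [hcw, consensusRate, Fintype.card_fin]
  have hdev : xbar (tq + (q + 1)) - ((1 / (L : ℝ)) • J) * xbar (tq + (q + 1))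
      = centeringMatrix (Fin L) * xbar (tq + (q + 1)) := by
    rw [centeringMatrix, Matrix.sub_mul, Matrix.one_mul, hJ, Fintype.card_fin]
  have hunroll := hW.norm_centeringMatrix_mul_le_of_recurrence hG hη
    (x := fun k => xbar (tq + k)) (e := fun k => e (tq + k))
    (fun k => hrec (tq + (k + 1)) (by omega)) (q + 1)
  rw [← hcw', sum_range_succ'] at hunroll
  have hterm : ∀ k (y : Matrix (Fin L) (Fin n) ℝ),
      cw ^ (k + 1) * ‖centeringMatrix (Fin L) * y‖ ≤ L * (cw ^ k * ‖y‖) := fun k y => by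
    have hcw0 : 0 ≤ cw := hcw' ▸ hW.consensusRate_nonneg
    have hcwL : cw ≤ L := hcw' ▸
      (consensusRate_le_one hη.le).trans (Nat.one_le_cast.2 (Fin.pos_iff_nonempty.2 this))
    calc cw ^ (k + 1) * ‖centeringMatrix (Fin L) * y‖
        = cw ^ k * cw * ‖centeringMatrix (Fin L) * y‖ := by rw [pow_succ]
      _ ≤ cw ^ k * L * ‖y‖ := by gcongr; exact norm_centeringMatrix_mul_le y
      _ = L * (cw ^ k * ‖y‖) := by ring
  rw [hdev, Nat.add_sub_cancel, ← Finset.Ico_add_one_right_eq_Icc, sum_Ico_eq_sum_range,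
    Nat.add_sub_cancel, mul_sum]
  refine hunroll.trans <| (add_assoc _ _ _).symm.le.trans <|
    add_le_add_three ?_ (sum_le_sum fun s hs => ?_) ?_
  · simpa [mul_assoc] using hterm q (xbar tq)
  · have := mem_range.1 hs
    rw [show 1 + s - 1 = s by omega, show tq + (q + 1) - (1 + s) = tq + (q + 1 - (s + 1)) by omega]
    exact hterm s _
  · simpa using norm_centeringMatrix_mul_le_sqrt (e (tq + (q + 1)))

/-- Frobenius-norm bound on the deviation of the perturbed consensus
iterates from the row average, for a doubly stochastic weight matrix adapted to a
connected communication graph. -/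
theorem perturbed_consensus_deviation_frobenius_bound
    (L n tq : ℕ) (G : SimpleGraph (Fin L)) (hG : G.Connected)
    (η : ℝ) (hη : 0 < η) (W : Matrix (Fin L) (Fin L) ℝ)
    (hW_nonneg : ∀ i j, 0 ≤ W i j)
    (hW_row : ∀ i, ∑ j, W i j = 1)
    (hW_col : ∀ j, ∑ i, W i j = 1)
    (hW_diag : ∀ i, η ≤ W i i)
    (hW_adj : ∀ i j, G.Adj i j → η ≤ W i j)
    (hW_zero : ∀ i j, i ≠ j → ¬ G.Adj i j → W i j = 0)
    (cw : ℝ) (hcw : cw = 1 - η / (4 * (L : ℝ) ^ 2))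
    (J : Matrix (Fin L) (Fin L) ℝ) (hJ : J = Matrix.of fun _ _ => (1 : ℝ))
    (e xbar : ℕ → Matrix (Fin L) (Fin n) ℝ)
    (hrec : ∀ t : ℕ, tq < t → xbar t = W * xbar (t - 1) + e t) :
    ∀ p : ℕ, 1 ≤ p →
      ‖xbar (tq + p) - ((1 / (L : ℝ)) • J) * xbar (tq + p)‖
        ≤ (L : ℝ) * cw ^ (p - 1) * ‖xbar tq‖
          + (L : ℝ) * ∑ τ ∈ Finset.Icc 1 (p - 1), cw ^ (τ - 1) * ‖e (tq + p - τ)‖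
          + Real.sqrt ((L : ℝ) - 1) * ‖e (tq + p)‖ :=
  perturbed_consensus_deviation_frobenius_bound_general L n tq G hG η hη W hW_nonneg hW_row hW_col
    hW_diag hW_adj cw hcw J hJ e xbar hrec
end

section
/- Let W ∈ ℝ^{L×L} be a doubly stochastic matrix, let N_k ⊆ {1,…,L} with |N_k| = d_k, and let x_k : ℕ → ℝ^n and x̄_{jk} : ℕ → ℝ^n for j ∈ {1,…,L} be sequences satisfying, for all t ≥ 1: (i) x̄_{jk}(t−1) = x_k(t−1) for every j ∈ N_k, and (ii) x̄_{ik}(t) = Σ_{u=1}^{L} w_{iu} · x̂_{uk}(t) for every i, where x̂_{uk}(t) := x_k(t) if u ∈ N_k and x̂_{uk}(t) := x̄_{uk}(t−1) otherwise. Then the average x̄_{av,k}(t) := (1/L)·Σ_{j=1}^{L} x̄_{jk}(t) satisfies x̄_{av,k}(t) = x̄_{av,k}(0) + (d_k/L)·(x_k(t) − x_k(0)) for all t ≥ 0. -/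
open Matrix Finset

/-!
Summing the update over the agents and using that every column of `W` sums to one, the mixing
step leaves the total of the estimates unchanged. Thus the total changes only through the
`d_k` agents that overwrite their stale estimate `x̄_{jk}(t-1) = x_k(t-1)` with `x_k(t)`, i.e. by
`d_k • (x_k(t) - x_k(t-1))` per step, and telescoping gives the claim.
-/

theorem Matrix.sum_sum_smul_of_sum_col_eq_one {ι R M : Type*} [Fintype ι] [Semiring R]
    [AddCommMonoid M] [Module R M] (W : Matrix ι ι R) (hW : ∀ j, ∑ i, W i j = 1)
    (y : ι → M) : ∑ i, ∑ u, W i u • y u = ∑ u, y u := by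
  rw [Finset.sum_comm]
  simp only [← Finset.sum_smul, hW, one_smul]

theorem Finset.sum_ite_mem_eq_sum_add_card_smul {ι M : Type*} [Fintype ι] [DecidableEq ι]
    [AddCommGroup M]
    (N : Finset ι) (a c : M) (b : ι → M) (hb : ∀ u ∈ N, b u = c) :
    ∑ u, (if u ∈ N then a else b u) = ∑ u, b u + #N • (a - c) := by
  have hsplit : ∀ u, (if u ∈ N then a else b u) = b u + if u ∈ N then a - c else 0 := by
    intro u
    split_ifs with hu
    · rw [hb u hu, add_sub_cancel]
    · rw [add_zero]
  rw [Finset.sum_congr rfl fun u _ => hsplit u, Finset.sum_add_distrib, Finset.sum_ite_mem,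
    Finset.univ_inter, Finset.sum_const]

theorem eq_add_smul_sub_of_succ {R M : Type*} [Semiring R] [AddCommGroup M] [Module R M]
    (S x : ℕ → M) (c : R) (hS : ∀ t, S (t + 1) = S t + c • (x (t + 1) - x t)) (t : ℕ) :
    S t = S 0 + c • (x t - x 0) := by
  induction t with
  | zero => simp
  | succ t ih => rw [hS, ih, add_assoc, ← smul_add, sub_add_sub_cancel']

theorem state_tracking_average_evolution_general
    (L n : ℕ) (W : Matrix (Fin L) (Fin L) ℝ)
    (hW_col : ∀ j, ∑ i, W i j = 1)
    (Nk : Finset (Fin L)) (xk : ℕ → Fin n → ℝ)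
    (xbar : Fin L → ℕ → Fin n → ℝ)
    (hknown : ∀ t : ℕ, 1 ≤ t → ∀ j ∈ Nk, xbar j (t - 1) = xk (t - 1))
    (hupdate : ∀ t : ℕ, 1 ≤ t → ∀ i, xbar i t =
      ∑ u : Fin L, W i u • (if u ∈ Nk then xk t else xbar u (t - 1))) :
    ∀ t : ℕ, (1 / (L : ℝ)) • ∑ j : Fin L, xbar j t
      = (1 / (L : ℝ)) • ∑ j : Fin L, xbar j 0
        + ((Nk.card : ℝ) / (L : ℝ)) • (xk t - xk 0) := by
  have htotal_succ : ∀ t, ∑ j, xbar j (t + 1)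
      = ∑ j, xbar j t + (#Nk : ℝ) • (xk (t + 1) - xk t) := by
    intro t
    have hknown_t : ∀ j ∈ Nk, xbar j t = xk t := by
      simpa using hknown (t + 1) (Nat.le_add_left 1 t)
    simp only [hupdate (t + 1) (Nat.le_add_left 1 t), add_tsub_cancel_right,
      W.sum_sum_smul_of_sum_col_eq_one hW_col, Nat.cast_smul_eq_nsmul]
    exact Nk.sum_ite_mem_eq_sum_add_card_smul _ _ _ hknown_t
  intro t
  rw [eq_add_smul_sub_of_succ (fun t => ∑ j, xbar j t) xk _ htotal_succ t, smul_add, smul_smul, one_div_mul_eq_div]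

/-- evolution of the network-average estimate in the state-tracking
scheme: `x̄_{av,k}(t) = x̄_{av,k}(0) + (d_k/L)·(x_k(t) − x_k(0))`. -/
theorem state_tracking_average_evolution
    (L n : ℕ) (W : Matrix (Fin L) (Fin L) ℝ)
    (hW_nonneg : ∀ i j, 0 ≤ W i j)
    (hW_row : ∀ i, ∑ j, W i j = 1)
    (hW_col : ∀ j, ∑ i, W i j = 1)
    (Nk : Finset (Fin L)) (xk : ℕ → Fin n → ℝ)
    (xbar : Fin L → ℕ → Fin n → ℝ)
    (hknown : ∀ t : ℕ, 1 ≤ t → ∀ j ∈ Nk, xbar j (t - 1) = xk (t - 1))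
    (hupdate : ∀ t : ℕ, 1 ≤ t → ∀ i, xbar i t =
      ∑ u : Fin L, W i u • (if u ∈ Nk then xk t else xbar u (t - 1))) :
    ∀ t : ℕ, (1 / (L : ℝ)) • ∑ j : Fin L, xbar j t
      = (1 / (L : ℝ)) • ∑ j : Fin L, xbar j 0
        + ((Nk.card : ℝ) / (L : ℝ)) • (xk t - xk 0) :=
  state_tracking_average_evolution_general L n W hW_col Nk xk xbar hknown hupdate
end

section
/- Let φ(1), …, φ(N) ∈ ℝ^d and let 0 < m ≤ M < ∞ satisfy m·I ⪯ Σ_{t=1}^{N} φ(t)·φ(t)ᵀ ⪯ M·I (in the positive semidefinite order). If 0 < α < 1/M, then the operator norm of the product ∏_{t=1}^{N} (I − α·φ(t)·φ(t)ᵀ) (in any fixed order of the factors) is strictly less than 1. -/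
/-!
A factor `I - α u uᵀ` maps `x` to `x - α (u ⬝ x) u`, so it lowers `‖x‖²` by
`α (u ⬝ x)² (2 - α ‖u‖²)`. The upper excitation bound gives `‖φ t‖² ≤ M`, so with `α M < 1`
no factor increases `‖x‖`, and a factor decreases it unless `x ⟂ φ t`, in which case it fixes
`x`. So the product strictly decreases `‖x‖` unless `x` is orthogonal to every `φ t`, which
the lower excitation bound rules out for `x ≠ 0`. Writing `P` for the product, the supremum
of `‖P x‖` over the compact unit sphere is attained, so the operator norm of `P` is `< 1`.
-/

open Matrix Finset

open scoped Matrix.Norms.L2Operator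

namespace ContinuousLinearMap

variable {E F : Type*} [NormedAddCommGroup E] [NormedSpace ℝ E] [ProperSpace E]
  [SeminormedAddCommGroup F] [NormedSpace ℝ F]

theorem opNorm_lt_one_of_norm_apply_lt (f : E →L[ℝ] F) (hf : ∀ x ≠ 0, ‖f x‖ < ‖x‖) :
    ‖f‖ < 1 := by
  rcases subsingleton_or_nontrivial E with hE | hE
  · rw [opNorm_subsingleton]
    exact one_pos
  obtain ⟨x₀, hx₀, hmax⟩ := (isCompact_sphere (0 : E) 1).exists_isMaxOn
    (NormedSpace.sphere_nonempty.mpr zero_le_one) (map_continuous f).norm.continuousOn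
  rw [mem_sphere_zero_iff_norm] at hx₀
  have hfx₀ : ‖f x₀‖ < 1 := hx₀ ▸ hf x₀ (norm_ne_zero_iff.mp (by simp [hx₀]))
  refine (opNorm_le_of_unit_norm (norm_nonneg _) fun x hx => ?_).trans_lt hfx₀
  exact hmax (mem_sphere_zero_iff_norm.mpr hx)

end ContinuousLinearMap

namespace Matrix

variable {n : Type*} [Fintype n]

section CommRing

variable {R : Type*} [CommRing R]

theorem dotProduct_sum_vecMulVec_self_mulVec {ι : Type*} (s : Finset ι) (v : ι → n → R)
    (x : n → R) :
    x ⬝ᵥ (∑ t ∈ s, vecMulVec (v t) (v t)) *ᵥ x = ∑ t ∈ s, (v t ⬝ᵥ x) ^ 2 := by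
  rw [sum_mulVec, dotProduct_sum]
  refine sum_congr rfl fun t _ => ?_
  rw [vecMulVec_mulVec, op_smul_eq_smul, dotProduct_smul, smul_eq_mul, dotProduct_comm x, sq]

variable [DecidableEq n]

theorem one_sub_smul_vecMulVec_self_mulVec (α : R) (u x : n → R) :
    (1 - α • vecMulVec u u) *ᵥ x = x - (α * (u ⬝ᵥ x)) • u := by
  rw [sub_mulVec, one_mulVec, smul_mulVec, vecMulVec_mulVec, op_smul_eq_smul, smul_smul]

theorem one_sub_smul_vecMulVec_self_mulVec_dotProduct_self (α : R) (u x : n → R) :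
    (1 - α • vecMulVec u u) *ᵥ x ⬝ᵥ (1 - α • vecMulVec u u) *ᵥ x =
      x ⬝ᵥ x - α * (u ⬝ᵥ x) ^ 2 * (2 - α * (u ⬝ᵥ u)) := by
  rw [one_sub_smul_vecMulVec_self_mulVec]
  simp only [sub_dotProduct, dotProduct_sub, smul_dotProduct, dotProduct_smul, smul_eq_mul,
    dotProduct_comm x u]
  ring

theorem list_prod_one_sub_smul_vecMulVec_self_mulVec_of_forall_dotProduct_eq_zero (α : R)
    {l : List (n → R)} {x : n → R} (hx : ∀ u ∈ l, u ⬝ᵥ x = 0) :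
    (l.map fun u => 1 - α • vecMulVec u u).prod *ᵥ x = x := by
  induction l with
  | nil => simp
  | cons u l ih =>
    rw [List.map_cons, List.prod_cons, ← mulVec_mulVec,
      ih fun v hv => hx v (List.mem_cons_of_mem u hv), one_sub_smul_vecMulVec_self_mulVec,
      hx u List.mem_cons_self, mul_zero, zero_smul, sub_zero]

end CommRing

section LinearOrderedRing

variable {R : Type*} [CommRing R] [LinearOrder R] [IsStrictOrderedRing R]

theorem dotProduct_self_nonneg (x : n → R) : 0 ≤ x ⬝ᵥ x :=
  sum_nonneg fun i _ => mul_self_nonneg (x i)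

theorem PosSemidef.mul_dotProduct_self_le_dotProduct_mulVec [StarRing R] [TrivialStar R]
    {A : Matrix n n R} {c : R} [DecidableEq n] (h : (A - c • 1).PosSemidef) (x : n → R) :
    c * (x ⬝ᵥ x) ≤ x ⬝ᵥ A *ᵥ x := by
  have := h.dotProduct_mulVec_nonneg x
  rw [star_trivial, sub_mulVec, smul_mulVec, one_mulVec, dotProduct_sub, dotProduct_smul,
    smul_eq_mul, sub_nonneg] at this
  exact this

theorem PosSemidef.dotProduct_mulVec_le_mul_dotProduct_self [StarRing R] [TrivialStar R]
    {A : Matrix n n R} {c : R} [DecidableEq n] (h : (c • 1 - A).PosSemidef) (x : n → R) :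
    x ⬝ᵥ A *ᵥ x ≤ c * (x ⬝ᵥ x) := by
  have := h.dotProduct_mulVec_nonneg x
  rw [star_trivial, sub_mulVec, smul_mulVec, one_mulVec, dotProduct_sub, dotProduct_smul,
    smul_eq_mul, sub_nonneg] at this
  exact this

theorem dotProduct_self_le_of_sum_sq_dotProduct_le {ι : Type*} {s : Finset ι} {v : ι → n → R}
    {M : R} (hM : 0 ≤ M) (hv : ∀ x, ∑ t ∈ s, (v t ⬝ᵥ x) ^ 2 ≤ M * (x ⬝ᵥ x)) {t : ι}
    (ht : t ∈ s) : v t ⬝ᵥ v t ≤ M := by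
  have hsq : (v t ⬝ᵥ v t) ^ 2 ≤ M * (v t ⬝ᵥ v t) :=
    (single_le_sum (f := fun s => (v s ⬝ᵥ v t) ^ 2) (fun _ _ => sq_nonneg _) ht).trans (hv _)
  nlinarith [dotProduct_self_nonneg (v t)]

theorem exists_dotProduct_ne_zero_of_le_sum_sq {ι : Type*} {s : Finset ι} {v : ι → n → R}
    {m : R} (hm : 0 < m) {x : n → R} (hx : x ≠ 0)
    (hv : m * (x ⬝ᵥ x) ≤ ∑ t ∈ s, (v t ⬝ᵥ x) ^ 2) : ∃ t ∈ s, v t ⬝ᵥ x ≠ 0 := by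
  by_contra! h
  rw [sum_eq_zero fun t ht => by rw [h t ht, sq, mul_zero]] at hv
  have hxx : 0 < x ⬝ᵥ x :=
    (dotProduct_self_nonneg x).lt_of_ne' (dotProduct_self_eq_zero.not.mpr hx)
  nlinarith

variable [DecidableEq n]

theorem one_sub_smul_vecMulVec_self_mulVec_dotProduct_self_le {α : R} {u : n → R} (hα : 0 ≤ α)
    (hu : α * (u ⬝ᵥ u) ≤ 2) (x : n → R) :
    (1 - α • vecMulVec u u) *ᵥ x ⬝ᵥ (1 - α • vecMulVec u u) *ᵥ x ≤ x ⬝ᵥ x := by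
  rw [one_sub_smul_vecMulVec_self_mulVec_dotProduct_self, sub_le_self_iff]
  exact mul_nonneg (mul_nonneg hα (sq_nonneg _)) (sub_nonneg.mpr hu)

theorem one_sub_smul_vecMulVec_self_mulVec_dotProduct_self_lt {α : R} {u x : n → R} (hα : 0 < α)
    (hu : α * (u ⬝ᵥ u) < 2) (hx : u ⬝ᵥ x ≠ 0) :
    (1 - α • vecMulVec u u) *ᵥ x ⬝ᵥ (1 - α • vecMulVec u u) *ᵥ x < x ⬝ᵥ x := by
  rw [one_sub_smul_vecMulVec_self_mulVec_dotProduct_self, sub_lt_self_iff]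
  exact mul_pos (mul_pos hα (sq_pos_of_ne_zero hx)) (sub_pos.mpr hu)

theorem list_prod_one_sub_smul_vecMulVec_self_mulVec_dotProduct_self_lt {α : R}
    {l : List (n → R)} (hα : 0 < α) (hl : ∀ u ∈ l, α * (u ⬝ᵥ u) < 2) {x : n → R}
    (hx : ∃ u ∈ l, u ⬝ᵥ x ≠ 0) :
    (l.map fun u => 1 - α • vecMulVec u u).prod *ᵥ x ⬝ᵥ
      (l.map fun u => 1 - α • vecMulVec u u).prod *ᵥ x < x ⬝ᵥ x := by
  induction l with
  | nil => simp at hx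
  | cons u l ih =>
    have hu := hl u List.mem_cons_self
    rw [List.map_cons, List.prod_cons, ← mulVec_mulVec]
    by_cases hl' : ∃ v ∈ l, v ⬝ᵥ x ≠ 0
    · exact (one_sub_smul_vecMulVec_self_mulVec_dotProduct_self_le hα.le hu.le _).trans_lt
        (ih (fun v hv => hl v (List.mem_cons_of_mem u hv)) hl')
    · push Not at hl'
      rw [list_prod_one_sub_smul_vecMulVec_self_mulVec_of_forall_dotProduct_eq_zero α hl']
      obtain ⟨v, hv, hvx⟩ := hx
      obtain rfl | hv := List.mem_cons.mp hv
      · exact one_sub_smul_vecMulVec_self_mulVec_dotProduct_self_lt hα hu hvx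
      · exact absurd (hl' v hv) hvx

end LinearOrderedRing

theorem l2_opNorm_lt_one_of_dotProduct_mulVec_lt [DecidableEq n] (A : Matrix n n ℝ)
    (hA : ∀ x ≠ 0, A *ᵥ x ⬝ᵥ A *ᵥ x < x ⬝ᵥ x) : ‖A‖ < 1 := by
  have norm_sq : ∀ y : EuclideanSpace ℝ n, ‖y‖ ^ 2 = WithLp.ofLp y ⬝ᵥ WithLp.ofLp y := fun y => by
    rw [← real_inner_self_eq_norm_sq, EuclideanSpace.inner_eq_star_dotProduct, star_trivial]
  rw [cstar_norm_def]
  refine (toEuclideanCLM (n := n) (𝕜 := ℝ) A).opNorm_lt_one_of_norm_apply_lt fun x hx => ?_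
  rw [← sq_lt_sq₀ (norm_nonneg _) (norm_nonneg _), norm_sq, norm_sq, ofLp_toEuclideanCLM]
  exact hA _ (by simpa using hx)

end Matrix

namespace List

theorem mem_ofFn_perm_add_one_iff {α : Type*} {N : ℕ} (f : ℕ → α) (σ : Equiv.Perm (Fin N))
    (a : α) : a ∈ ofFn (fun k : Fin N => f ((σ k : ℕ) + 1)) ↔ ∃ t ∈ Icc 1 N, f t = a := by
  simp only [mem_ofFn, mem_Icc]
  constructor
  · rintro ⟨k, rfl⟩
    exact ⟨_, ⟨le_add_self, (σ k).isLt⟩, rfl⟩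
  · rintro ⟨t, ⟨ht1, htN⟩, rfl⟩
    refine ⟨σ.symm ⟨t - 1, by omega⟩, ?_⟩
    rw [Equiv.apply_symm_apply, Nat.sub_add_cancel ht1]

end List

theorem sgd_contraction_product_norm_lt_one_general
    (d N : ℕ) (φ : ℕ → Fin d → ℝ) (m M α : ℝ)
    (hm : 0 < m)
    (hlow : (((∑ t ∈ Finset.Icc 1 N, Matrix.vecMulVec (φ t) (φ t))
        - m • (1 : Matrix (Fin d) (Fin d) ℝ))).PosSemidef)
    (hhigh : ((M • (1 : Matrix (Fin d) (Fin d) ℝ))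
        - ∑ t ∈ Finset.Icc 1 N, Matrix.vecMulVec (φ t) (φ t)).PosSemidef)
    (hα0 : 0 < α) (hα : α < 1 / M)
    (σ : Equiv.Perm (Fin N)) :
    ‖(List.ofFn fun k : Fin N =>
        (1 : Matrix (Fin d) (Fin d) ℝ)
          - α • Matrix.vecMulVec (φ ((σ k : ℕ) + 1)) (φ ((σ k : ℕ) + 1))).prod‖ < 1 := by
  have hM : 0 < M := one_div_pos.mp (hα0.trans hα)
  have hαM : α * M < 1 := (lt_div_iff₀ hM).mp hα
  set u := List.ofFn fun k : Fin N => φ ((σ k : ℕ) + 1)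
  have mem_u : ∀ v, v ∈ u ↔ ∃ t ∈ Icc 1 N, φ t = v := List.mem_ofFn_perm_add_one_iff φ σ
  have hstep : ∀ v ∈ u, α * (v ⬝ᵥ v) < 2 := by
    intro v hv
    obtain ⟨t, ht, rfl⟩ := (mem_u v).mp hv
    have hφt : φ t ⬝ᵥ φ t ≤ M := dotProduct_self_le_of_sum_sq_dotProduct_le hM.le
      (fun x => dotProduct_sum_vecMulVec_self_mulVec (Icc 1 N) φ x ▸
        hhigh.dotProduct_mulVec_le_mul_dotProduct_self x) ht
    calc α * (φ t ⬝ᵥ φ t) ≤ α * M := mul_le_mul_of_nonneg_left hφt hα0.le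
      _ < 2 := by linarith
  have hexcite : ∀ x ≠ 0, ∃ v ∈ u, v ⬝ᵥ x ≠ 0 := by
    intro x hx
    obtain ⟨t, ht, hφx⟩ := exists_dotProduct_ne_zero_of_le_sum_sq hm hx
      (dotProduct_sum_vecMulVec_self_mulVec (Icc 1 N) φ x ▸
        hlow.mul_dotProduct_self_le_dotProduct_mulVec x)
    exact ⟨φ t, (mem_u _).mpr ⟨t, ht, rfl⟩, hφx⟩
  have hprod : (List.ofFn fun k : Fin N => (1 : Matrix (Fin d) (Fin d) ℝ)
      - α • vecMulVec (φ ((σ k : ℕ) + 1)) (φ ((σ k : ℕ) + 1))) =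
      u.map fun v => 1 - α • vecMulVec v v := by
    rw [List.map_ofFn]; rfl
  rw [hprod]
  exact l2_opNorm_lt_one_of_dotProduct_mulVec_lt _ fun x hx =>
    list_prod_one_sub_smul_vecMulVec_self_mulVec_dotProduct_self_lt hα0 hstep (hexcite x hx)

/-- under persistent excitation
`m·I ⪯ ∑_{t=1}^{N} φ(t)φ(t)ᵀ ⪯ M·I` and step size `0 < α < 1/M`, the product
`∏_{t=1}^{N} (I − α φ(t)φ(t)ᵀ)`, in any fixed order of the factors, has
(L2) operator norm strictly less than 1. -/
theorem sgd_contraction_product_norm_lt_one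
    (d N : ℕ) (φ : ℕ → Fin d → ℝ) (m M α : ℝ)
    (hm : 0 < m) (hmM : m ≤ M)
    (hlow : (((∑ t ∈ Finset.Icc 1 N, Matrix.vecMulVec (φ t) (φ t))
        - m • (1 : Matrix (Fin d) (Fin d) ℝ))).PosSemidef)
    (hhigh : ((M • (1 : Matrix (Fin d) (Fin d) ℝ))
        - ∑ t ∈ Finset.Icc 1 N, Matrix.vecMulVec (φ t) (φ t)).PosSemidef)
    (hα0 : 0 < α) (hα : α < 1 / M)
    (σ : Equiv.Perm (Fin N)) :
    ‖(List.ofFn fun k : Fin N =>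
        (1 : Matrix (Fin d) (Fin d) ℝ)
          - α • Matrix.vecMulVec (φ ((σ k : ℕ) + 1)) (φ ((σ k : ℕ) + 1))).prod‖ < 1 :=
  sgd_contraction_product_norm_lt_one_general d N φ m M α hm hlow hhigh hα0 hα σ
end
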